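/- Let n be an even positive integer with prime factorization n = 2 p_1^{J_1} p_2^{J_2} ··· p_s^{J_s}, where s ≥ 2, p_1 < p_2 < ··· < p_s are odd primes, each J_i ≥ 1, and for every r ∈ {1,...,s-1} one has ∏_{i=1}^{r} p_i^{J_i} < p_{r+1}. Let D_1 and D_2 be sets of divisors of n with n ∉ D_1 and n ∉ D_2. If the integral circulant graphs ICG(n,D_1) and ICG(n,D_2) are isospectral, then D_1 = D_2. -/

import Mathlib

open Finset

/-- `ω_n = exp(2πi/n)`. -/
noncomputable def omegaN (n : ℕ) : ℂ := Complex.exp (2 * Real.pi * Complex.I / n)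

/-- `λ_k(S) = ∑_{g ∈ S} ω_n^{k g}`, the eigenvalues of the circulant graph `Cay(ℤ_n, S)`. -/
noncomputable def lam (n : ℕ) (S : Finset ℕ) (k : ℕ) : ℂ :=
  ∑ g ∈ S, omegaN n ^ (k * g)

/-- The spectrum of `Cay(ℤ_n, S)`, i.e. the multiset `(λ_k(S))_{k ∈ [n]}`. -/
noncomputable def spec (n : ℕ) (S : Finset ℕ) : Multiset ℂ :=
  (Finset.Icc 1 n).val.map (lam n S)

/-- The connection set of `ICG(n, D)`:
`⋃_{d ∈ D} G_n(d) = {j ∈ [n] : gcd(j,n) ∈ D}` where `G_n(d) = {j ∈ [n] : gcd(j,n) = d}`. -/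
def connSet (n : ℕ) (D : Finset ℕ) : Finset ℕ :=
  (Finset.Icc 1 n).filter (fun j => Nat.gcd j n ∈ D)

/-!
Isospectrality fixes the degree `λ_n = |S|` and, by a parity count, also
`λ_{n/2} = ∑_{g ∈ S} (-1)^g`, since all other eigenvalues come in pairs `λ_k = λ_{n-k}`.
Writing `n = 2m` with `m` odd, every divisor of `n` is `e` or `2e` with `e ∣ m`, and these two
numbers become `A + B` and `B - A`, where `A` and `B` sum `φ (m / e)` over the two kinds of
divisors in `D`. So `A` and `B` agree for `D₁` and `D₂`.

The separation condition makes `X ↦ ∑_{d ∈ X} φ d` injective on sets of divisors of `m`.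
Split off the largest prime `P = p_s`: the sum is a number in the mixed radix `P - 1, P, P, …`
whose digits are the totient sums over the slices `{e ∣ m' : e * P^j ∈ X}`, each at most
`m' = ∏_{i < s} p_i^{J_i} ≤ P - 2`, so the digits and then, by induction, the slices are determined.
-/

open scoped Nat

section Spectrum

variable {n : ℕ}

theorem isPrimitiveRoot_omegaN (hn : n ≠ 0) : IsPrimitiveRoot (omegaN n) n :=
  Complex.isPrimitiveRoot_exp n hn

theorem lam_self (hn : n ≠ 0) (S : Finset ℕ) : lam n S n = #S := by
  simp [lam, pow_mul, (isPrimitiveRoot_omegaN hn).pow_eq_one]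

theorem norm_lam_le (S : Finset ℕ) (k : ℕ) : ‖lam n S k‖ ≤ #S := by
  rcases eq_or_ne n 0 with rfl | hn
  · simp [lam, omegaN]
  calc ‖lam n S k‖ ≤ ∑ g ∈ S, ‖omegaN n ^ (k * g)‖ := norm_sum_le _ _
    _ = #S := by simp [(isPrimitiveRoot_omegaN hn).norm'_eq_one hn]

theorem lam_div_two (hn : Even n) (hn0 : n ≠ 0) (S : Finset ℕ) :
    lam n S (n / 2) = ∑ g ∈ S, (-1 : ℂ) ^ g := by
  have h2n := hn.two_dvd
  have h2 : IsPrimitiveRoot (omegaN n ^ (n / 2)) 2 := by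
    simpa [Nat.div_div_self h2n hn0] using
      (isPrimitiveRoot_omegaN hn0).pow_of_dvd (by omega) (Nat.div_dvd_of_dvd h2n)
  simp only [lam, pow_mul, h2.eq_neg_one_of_two_right]

theorem card_le_of_spec_eq (hn : n ≠ 0) {S T : Finset ℕ} (h : spec n S = spec n T) :
    #S ≤ #T := by
  have hmem : lam n S n ∈ spec n T :=
    h ▸ Multiset.mem_map_of_mem _ (Finset.mem_Icc.mpr ⟨Nat.one_le_iff_ne_zero.mpr hn, le_rfl⟩)
  obtain ⟨k, -, hk⟩ := Multiset.mem_map.mp hmem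
  have : (#S : ℝ) ≤ #T := calc
    (#S : ℝ) = ‖lam n T k‖ := by rw [hk, lam_self hn, Complex.norm_natCast]
    _ ≤ #T := norm_lam_le T k
  exact_mod_cast this

theorem card_eq_of_spec_eq (hn : n ≠ 0) {S T : Finset ℕ} (h : spec n S = spec n T) :
    #S = #T :=
  (card_le_of_spec_eq hn h).antisymm (card_le_of_spec_eq hn h.symm)

theorem lam_sub {S : Finset ℕ} (hS : ∀ g ∈ S, g ≤ n ∧ n - g ∈ S) {k : ℕ} (hk : k ≤ n) :
    lam n S (n - k) = lam n S k := by
  rcases eq_or_ne n 0 with rfl | hn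
  · obtain rfl : k = 0 := by omega
    rfl
  refine Finset.sum_nbij' (n - ·) (n - ·) (fun g hg => (hS g hg).2) (fun g hg => (hS g hg).2)
    (fun g hg => by have := (hS g hg).1; omega) (fun g hg => by have := (hS g hg).1; omega)
    fun g hg => ?_
  have hω := isPrimitiveRoot_omegaN hn
  refine mul_right_cancel₀ (pow_ne_zero (k * g) (hω.ne_zero hn)) ?_
  rw [← pow_add, ← pow_add, ← add_mul, Nat.sub_add_cancel hk, ← mul_add,
    Nat.sub_add_cancel (hS g hg).1, pow_mul, hω.pow_eq_one, one_pow, mul_comm, pow_mul,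
    hω.pow_eq_one, one_pow]

theorem count_spec_cast_zmod_two (hn : Even n) (hn0 : n ≠ 0) {S : Finset ℕ}
    (hS : ∀ g ∈ S, g ≤ n ∧ n - g ∈ S) (v : ℂ) :
    ((spec n S).count v : ZMod 2)
      = (if v = lam n S (n / 2) then 1 else 0) + if v = lam n S n then 1 else 0 := by
  set f : ℕ → ZMod 2 := fun k => if v = lam n S k then 1 else 0
  have hcount : ((spec n S).count v : ZMod 2) = ∑ k ∈ Icc 1 n, f k := by
    rw [spec, Multiset.count_map, ← Finset.filter_val, Finset.card_val, Finset.card_filter]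
    push_cast
    rfl
  have h2 := hn.two_dvd
  have hmem : n ∈ Icc 1 n := Finset.mem_Icc.mpr (by omega)
  have hmem' : n / 2 ∈ (Icc 1 n).erase n := by simp only [Finset.mem_erase, Finset.mem_Icc]; omega
  -- `k ↦ n - k` pairs up equal terms, which cancel in `ZMod 2`
  have hpairs : ∑ k ∈ ((Icc 1 n).erase n).erase (n / 2), f k = 0 := by
    refine Finset.sum_involution (fun k _ => n - k) (fun k hk => ?_) (fun k hk _ => ?_)
      (fun k hk => ?_) (fun k hk => ?_) <;>
      simp only [Finset.mem_erase, Finset.mem_Icc] at hk ⊢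
    · simp only [f, lam_sub hS (by omega : k ≤ n)]
      exact CharTwo.add_self_eq_zero _
    all_goals omega
  rw [hcount, ← Finset.sum_erase_add _ _ hmem, ← Finset.sum_erase_add _ _ hmem', hpairs, zero_add]

theorem lam_div_two_eq_of_spec_eq (hn : Even n) (hn0 : n ≠ 0) {S T : Finset ℕ}
    (hS : ∀ g ∈ S, g ≤ n ∧ n - g ∈ S) (hT : ∀ g ∈ T, g ≤ n ∧ n - g ∈ T)
    (h : spec n S = spec n T) : lam n S (n / 2) = lam n T (n / 2) := by
  have hcount := count_spec_cast_zmod_two hn hn0 hT (lam n S (n / 2))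
  rw [← h, count_spec_cast_zmod_two hn hn0 hS, lam_self hn0, lam_self hn0,
    card_eq_of_spec_eq hn0 h, add_left_inj, if_pos rfl] at hcount
  by_contra hne
  rw [if_neg hne] at hcount
  exact one_ne_zero hcount

end Spectrum

section ConnectionSet

variable {n : ℕ} {D : Finset ℕ}

theorem connSet_symm (hnD : n ∉ D) : ∀ g ∈ connSet n D, g ≤ n ∧ n - g ∈ connSet n D := by
  intro g hg
  simp only [connSet, Finset.mem_filter, Finset.mem_Icc] at hg ⊢
  obtain ⟨⟨hg1, hgn⟩, hgD⟩ := hg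
  have hlt : g < n := lt_of_le_of_ne hgn (by rintro rfl; simp_all)
  refine ⟨hgn, ⟨by omega, by omega⟩, ?_⟩
  obtain ⟨c, rfl⟩ : ∃ c, n = c + g := ⟨n - g, by omega⟩
  rwa [Nat.add_sub_cancel, Nat.gcd_self_add_right, Nat.gcd_comm, ← Nat.gcd_add_self_right]

theorem card_filter_gcd_eq {d : ℕ} (hd : d ∣ n) (hdn : d ≠ n) :
    #{j ∈ Icc 1 n | j.gcd n = d} = φ (n / d) := by
  rw [Nat.totient_div_of_dvd hd]
  congr 1
  ext j
  simp only [Finset.mem_filter, Finset.mem_Icc, Finset.mem_range, Nat.gcd_comm n j]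
  constructor
  · rintro ⟨⟨-, hjn⟩, rfl⟩
    exact ⟨lt_of_le_of_ne hjn (by rintro rfl; simp at hdn), rfl⟩
  · rintro ⟨hjn, rfl⟩
    refine ⟨⟨Nat.one_le_iff_ne_zero.mpr ?_, hjn.le⟩, rfl⟩
    rintro rfl
    simp at hdn

theorem sum_connSet {M : Type*} [AddCommMonoid M] (f : ℕ → M) :
    ∑ g ∈ connSet n D, f g = ∑ d ∈ D, ∑ g ∈ Icc 1 n with g.gcd n = d, f g := by
  rw [← Finset.sum_fiberwise_of_maps_to (s := connSet n D) (t := D) (g := (·.gcd n))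
    (fun g hg => (Finset.mem_filter.mp hg).2)]
  refine Finset.sum_congr rfl fun d hd => ?_
  rw [connSet, Finset.filter_filter]
  refine Finset.sum_congr (Finset.filter_congr fun g _ => ?_) fun _ _ => rfl
  constructor
  · exact And.right
  · rintro rfl; exact ⟨hd, rfl⟩

theorem card_connSet (hD : D ⊆ n.divisors) (hnD : n ∉ D) :
    #(connSet n D) = ∑ d ∈ D, φ (n / d) := by
  rw [Finset.card_eq_sum_ones, sum_connSet, ← Finset.sum_congr rfl fun d hd =>
    card_filter_gcd_eq (Nat.dvd_of_mem_divisors (hD hd)) (ne_of_mem_of_not_mem hd hnD)]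
  simp

theorem lam_connSet_div_two (hn : Even n) (hn0 : n ≠ 0) (hD : D ⊆ n.divisors) (hnD : n ∉ D) :
    lam n (connSet n D) (n / 2) = ((∑ d ∈ D, (-1) ^ d * φ (n / d) : ℤ) : ℂ) := by
  rw [lam_div_two hn hn0, sum_connSet]
  push_cast
  refine Finset.sum_congr rfl fun d hd => ?_
  -- since `n` is even, `g` and `gcd g n` have the same parity
  have hsign : ∀ g ∈ {j ∈ Icc 1 n | j.gcd n = d}, (-1 : ℂ) ^ g = (-1) ^ d := by
    intro g hg
    obtain ⟨-, rfl⟩ := Finset.mem_filter.mp hg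
    rcases Nat.even_or_odd g with hg | hg
    · exact hg.neg_one_pow.trans
        (even_iff_two_dvd.mpr (Nat.dvd_gcd hg.two_dvd hn.two_dvd)).neg_one_pow.symm
    · exact hg.neg_one_pow.trans (hg.of_dvd_nat (Nat.gcd_dvd_left g n)).neg_one_pow.symm
  rw [Finset.sum_congr rfl hsign, Finset.sum_const, card_filter_gcd_eq
    (Nat.dvd_of_mem_divisors (hD hd)) (ne_of_mem_of_not_mem hd hnD), nsmul_eq_mul, mul_comm]

end ConnectionSet

namespace Nat

theorem eq_of_sum_prod_mul_eq {K : ℕ} {b t u : ℕ → ℕ} (ht : ∀ j < K, t j < b j)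
    (hu : ∀ j < K, u j < b j)
    (h : ∑ j ∈ range K, (∏ i ∈ range j, b i) * t j = ∑ j ∈ range K, (∏ i ∈ range j, b i) * u j) :
    ∀ j < K, t j = u j := by
  induction K generalizing b t u with
  | zero => simp
  | succ K ih =>
    have split : ∀ w : ℕ → ℕ, ∑ j ∈ range (K + 1), (∏ i ∈ range j, b i) * w j
        = w 0 + b 0 * ∑ j ∈ range K, (∏ i ∈ range j, b (i + 1)) * w (j + 1) := by
      intro w
      rw [sum_range_succ', mul_sum, add_comm]
      simp only [prod_range_succ', prod_range_zero, one_mul]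
      congr 1
      exact sum_congr rfl fun j _ => by ring
    rw [split, split] at h
    have h0 : t 0 = u 0 := by
      have := congrArg (· % b 0) h
      simpa [Nat.add_mul_mod_self_left, Nat.mod_eq_of_lt (ht 0 K.succ_pos),
        Nat.mod_eq_of_lt (hu 0 K.succ_pos)] using this
    rw [h0, add_right_inj, Nat.mul_right_inj (by have := ht 0 K.succ_pos; omega)] at h
    rintro (_ | j) hj
    · exact h0
    · exact ih (fun j hj => ht (j + 1) (by omega)) (fun j hj => hu (j + 1) (by omega)) h j
        (by omega)

theorem eq_of_sum_totient_prime_pow_mul_eq {P K : ℕ} (hP : P.Prime) {t u : ℕ → ℕ}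
    (ht : ∀ j < K, t j + 2 ≤ P) (hu : ∀ j < K, u j + 2 ≤ P)
    (h : ∑ j ∈ range K, φ (P ^ j) * t j = ∑ j ∈ range K, φ (P ^ j) * u j) :
    ∀ j < K, t j = u j := by
  -- `φ (P ^ j)` are the place values of the mixed radix `P - 1, P, P, …`
  set b : ℕ → ℕ := fun i => if i = 0 then P - 1 else P
  have hb : ∀ j, φ (P ^ j) = ∏ i ∈ range j, b i := by
    rintro (_ | j)
    · simp
    · simp [b, prod_range_succ', Nat.totient_prime_pow_succ hP]
  simp only [hb] at h
  have hlt : ∀ j c, c + 2 ≤ P → c < b j := fun j c hc => by simp only [b]; split_ifs <;> omega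
  exact eq_of_sum_prod_mul_eq (fun j hj => hlt j _ (ht j hj)) (fun j hj => hlt j _ (hu j hj)) h

def divisorSlice (a f : ℕ) (X : Finset ℕ) : Finset ℕ := {e ∈ a.divisors | e * f ∈ X}

theorem divisorSlice_subset (a f : ℕ) (X : Finset ℕ) : divisorSlice a f X ⊆ a.divisors :=
  filter_subset _ _

theorem eq_of_divisorSlice_eq {a b : ℕ} {X Y : Finset ℕ} (hX : X ⊆ (a * b).divisors)
    (hY : Y ⊆ (a * b).divisors) (h : ∀ f ∈ b.divisors, divisorSlice a f X = divisorSlice a f Y) :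
    X = Y := by
  ext x
  by_cases hx : x ∈ (a * b).divisors
  · rw [Nat.divisors_mul, Finset.mem_mul] at hx
    obtain ⟨e, he, f, hf, rfl⟩ := hx
    simpa [divisorSlice, he] using congrArg (e ∈ ·) (h f hf)
  · exact iff_of_false (fun h => hx (hX h)) (fun h => hx (hY h))

theorem sum_eq_sum_divisors_sum_divisorSlice {M : Type*} [AddCommMonoid M] {a b : ℕ}
    (hab : a.Coprime b) {X : Finset ℕ} (hX : X ⊆ (a * b).divisors) (g : ℕ → M) :
    ∑ x ∈ X, g x = ∑ f ∈ b.divisors, ∑ e ∈ divisorSlice a f X, g (e * f) := by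
  simp only [divisorSlice, sum_filter]
  rw [sum_comm, ← sum_product' (f := fun e f => if e * f ∈ X then g (e * f) else 0), ← sum_filter]
  symm
  refine sum_bij (fun p _ => p.1 * p.2) (fun p hp => (mem_filter.mp hp).2)
    (fun p hp q hq hpq => hab.mul_injOn_divisors (mem_filter.mp hp).1 (mem_filter.mp hq).1 hpq)
    (fun x hx => ?_) fun _ _ => rfl
  have := hX hx
  rw [Nat.divisors_mul, Finset.mem_mul] at this
  obtain ⟨e, he, f, hf, rfl⟩ := this
  exact ⟨(e, f), mem_filter.mpr ⟨mem_product.mpr ⟨he, hf⟩, hx⟩, rfl⟩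

theorem sum_totient_eq_sum_range {m P K : ℕ} (hP : P.Prime) (hPm : ¬P ∣ m) {X : Finset ℕ}
    (hX : X ⊆ (m * P ^ K).divisors) :
    ∑ d ∈ X, φ d = ∑ j ∈ range (K + 1), φ (P ^ j) * ∑ e ∈ divisorSlice m (P ^ j) X, φ e := by
  have hmP : m.Coprime P := ((hP.coprime_iff_not_dvd).mpr hPm).symm
  rw [sum_eq_sum_divisors_sum_divisorSlice (hmP.pow_right K) hX, Nat.divisors_prime_pow hP, sum_map]
  simp only [Function.Embedding.coeFn_mk]
  refine sum_congr rfl fun j hj => ?_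
  rw [mul_sum]
  refine sum_congr rfl fun e he => ?_
  have he : e.Coprime (P ^ j) :=
    (hmP.coprime_dvd_left (Nat.dvd_of_mem_divisors (divisorSlice_subset _ _ _ he))).pow_right j
  rw [Nat.totient_mul he, mul_comm]

theorem injOn_sum_totient_mul_prime_pow {m P : ℕ} (hP : P.Prime) (hPm : ¬P ∣ m)
    (hmP : m + 2 ≤ P) (hm : Set.InjOn (fun X : Finset ℕ => ∑ d ∈ X, φ d) {X | X ⊆ m.divisors})
    (K : ℕ) : Set.InjOn (fun X : Finset ℕ => ∑ d ∈ X, φ d) {X | X ⊆ (m * P ^ K).divisors} := by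
  intro X hX Y hY hXY
  -- each slice sum is at most `∑ e ∣ m, φ e = m ≤ P - 2`, so it is a digit
  have hdigit : ∀ Z j, ∑ e ∈ divisorSlice m (P ^ j) Z, φ e + 2 ≤ P := fun Z j =>
    le_trans (Nat.add_le_add_right ((sum_le_sum_of_subset (divisorSlice_subset _ _ _)).trans_eq
      (Nat.sum_totient m)) 2) hmP
  simp only [sum_totient_eq_sum_range hP hPm hX, sum_totient_eq_sum_range hP hPm hY] at hXY
  have hslice := eq_of_sum_totient_prime_pow_mul_eq hP (fun j _ => hdigit X j)
    (fun j _ => hdigit Y j) hXY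
  refine eq_of_divisorSlice_eq hX hY fun f hf => ?_
  obtain ⟨j, hj, rfl⟩ := (Nat.mem_divisors_prime_pow hP K).mp hf
  exact hm (divisorSlice_subset _ _ _) (divisorSlice_subset _ _ _) (hslice j (by omega))

theorem odd_prod_range_pow {p J : ℕ → ℕ} {s : ℕ} (hp : ∀ i < s, Odd (p i)) :
    Odd (∏ i ∈ range s, p i ^ J i) :=
  prod_induction _ Odd (fun _ _ => Odd.mul) odd_one fun i hi => (hp i (mem_range.mp hi)).pow

theorem injOn_sum_totient_prod_prime_pow {p J : ℕ → ℕ} {s : ℕ}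
    (hp : ∀ i < s, (p i).Prime ∧ Odd (p i))
    (hsep : ∀ r, 1 ≤ r → r < s → ∏ i ∈ range r, p i ^ J i < p r) :
    Set.InjOn (fun X : Finset ℕ => ∑ d ∈ X, φ d) {X | X ⊆ (∏ i ∈ range s, p i ^ J i).divisors} := by
  induction s with
  | zero =>
    intro X hX Y hY hXY
    simp only [range_zero, prod_empty, Nat.divisors_one, Set.mem_ofPred_eq,
      subset_singleton_iff] at hX hY
    rcases hX with rfl | rfl <;> rcases hY with rfl | rfl <;> simp_all
  | succ s ih =>
    set m := ∏ i ∈ range s, p i ^ J i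
    obtain ⟨hP, k, hk⟩ := hp s s.lt_succ_self
    obtain ⟨l, hl⟩ : Odd m := odd_prod_range_pow fun i hi => (hp i (by omega)).2
    have hmP : m < p s := by
      rcases Nat.eq_zero_or_pos s with rfl | hs
      · simpa [m] using hP.one_lt
      · exact hsep s hs s.lt_succ_self
    rw [prod_range_succ]
    exact injOn_sum_totient_mul_prime_pow hP (Nat.not_dvd_of_pos_of_lt (by omega) hmP) (by omega)
      (ih (fun i hi => hp i (by omega)) fun r h1 h2 => hsep r h1 (by omega)) (J s)

theorem injOn_sum_totient_div {m : ℕ}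
    (h : Set.InjOn (fun X : Finset ℕ => ∑ d ∈ X, φ d) {X | X ⊆ m.divisors}) :
    Set.InjOn (fun Y : Finset ℕ => ∑ e ∈ Y, φ (m / e)) {Y | Y ⊆ m.divisors} := by
  have hinv : ∀ e ∈ m.divisors, m / (m / e) = e := fun e he =>
    Nat.div_div_self (Nat.dvd_of_mem_divisors he) (Nat.mem_divisors.mp he).2
  have himage : ∀ Y ⊆ m.divisors, Y.image (m / ·) ⊆ m.divisors := fun Y hY d hd => by
    obtain ⟨e, he, rfl⟩ := mem_image.mp hd
    exact Nat.mem_divisors.mpr ⟨Nat.div_dvd_of_dvd (Nat.dvd_of_mem_divisors (hY he)),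
      (Nat.mem_divisors.mp (hY he)).2⟩
  have hsum : ∀ Y ⊆ m.divisors, ∑ e ∈ Y, φ (m / e) = ∑ d ∈ Y.image (m / ·), φ d := fun Y hY =>
    (sum_image fun a ha b hb hab => by
      rw [← hinv a (hY ha), ← hinv b (hY hb)]; exact congrArg (m / ·) hab).symm
  have hback : ∀ Y ⊆ m.divisors, (Y.image (m / ·)).image (m / ·) = Y := fun Y hY => by
    rw [image_image]
    exact (image_congr fun e he => hinv e (hY he)).trans image_id
  intro Y₁ hY₁ Y₂ hY₂ hY
  simp only [hsum Y₁ hY₁, hsum Y₂ hY₂] at hY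
  rw [← hback Y₁ hY₁, ← hback Y₂ hY₂, h (himage Y₁ hY₁) (himage Y₂ hY₂) hY]

theorem sum_mul_totient_two_mul_div {R : Type*} [CommSemiring R] {m : ℕ} (hm : Odd m)
    {D : Finset ℕ} (hD : D ⊆ (2 * m).divisors) (w : ℕ → R) :
    ∑ d ∈ D, w d * φ (2 * m / d)
      = ∑ e ∈ divisorSlice m 1 D, w e * φ (m / e)
        + ∑ e ∈ divisorSlice m 2 D, w (e * 2) * φ (m / e) := by
  rw [mul_comm 2 m] at hD ⊢
  rw [sum_eq_sum_divisors_sum_divisorSlice hm.coprime_two_right hD, Nat.prime_two.divisors,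
    sum_pair (by norm_num)]
  congr 1 <;> refine sum_congr rfl fun e he => ?_
  all_goals have hem : e ∣ m := Nat.dvd_of_mem_divisors (divisorSlice_subset _ _ _ he)
  · rw [mul_one, Nat.mul_div_right_comm hem, mul_comm (m / e),
      Nat.totient_two_mul_of_odd (hm.of_dvd_nat (Nat.div_dvd_of_dvd hem))]
  · rw [Nat.mul_div_mul_right _ _ two_pos]

theorem sum_totient_two_mul_div {m : ℕ} (hm : Odd m) {D : Finset ℕ} (hD : D ⊆ (2 * m).divisors) :
    ∑ d ∈ D, φ (2 * m / d)
      = ∑ e ∈ divisorSlice m 1 D, φ (m / e) + ∑ e ∈ divisorSlice m 2 D, φ (m / e) := by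
  simpa using sum_mul_totient_two_mul_div (R := ℕ) hm hD 1

theorem sum_neg_one_pow_mul_totient_two_mul_div {m : ℕ} (hm : Odd m) {D : Finset ℕ}
    (hD : D ⊆ (2 * m).divisors) :
    ∑ d ∈ D, (-1) ^ d * (φ (2 * m / d) : ℤ)
      = ((∑ e ∈ divisorSlice m 2 D, φ (m / e) : ℕ) : ℤ)
        - (∑ e ∈ divisorSlice m 1 D, φ (m / e) : ℕ) := by
  push_cast
  rw [sum_mul_totient_two_mul_div hm hD, sub_eq_neg_add, ← sum_neg_distrib]
  congr 1 <;> refine sum_congr rfl fun e he => ?_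
  all_goals
    have he : Odd e := hm.of_dvd_nat (Nat.dvd_of_mem_divisors (divisorSlice_subset _ _ _ he))
  · rw [he.neg_one_pow, neg_one_mul]
  · rw [pow_mul, he.neg_one_pow, neg_one_sq, one_mul]

end Nat

theorem so_even_type_general
    (n s : ℕ) (p J : ℕ → ℕ)
    (hp : ∀ i < s, (p i).Prime ∧ Odd (p i))
    (hfact : n = 2 * ∏ i ∈ Finset.range s, p i ^ J i)
    (hsep : ∀ r, 1 ≤ r → r < s → ∏ i ∈ Finset.range r, p i ^ J i < p r)
    (D₁ D₂ : Finset ℕ)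
    (hD₁ : D₁ ⊆ n.divisors) (hD₂ : D₂ ⊆ n.divisors)
    (hn₁ : n ∉ D₁) (hn₂ : n ∉ D₂)
    (hspec : spec n (connSet n D₁) = spec n (connSet n D₂)) :
    D₁ = D₂ := by
  have hm := Nat.odd_prod_range_pow (J := J) fun i hi => (hp i hi).2
  have hinj := Nat.injOn_sum_totient_div (Nat.injOn_sum_totient_prod_prime_pow hp hsep)
  generalize ∏ i ∈ Finset.range s, p i ^ J i = m at hm hinj hfact
  subst hfact
  have hn0 : 2 * m ≠ 0 := by have := hm.pos; omega
  have hcard := card_eq_of_spec_eq hn0 hspec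
  rw [card_connSet hD₁ hn₁, card_connSet hD₂ hn₂, Nat.sum_totient_two_mul_div hm hD₁,
    Nat.sum_totient_two_mul_div hm hD₂] at hcard
  have hhalf := lam_div_two_eq_of_spec_eq (even_two_mul m) hn0 (connSet_symm hn₁)
    (connSet_symm hn₂) hspec
  rw [lam_connSet_div_two (even_two_mul m) hn0 hD₁ hn₁,
    lam_connSet_div_two (even_two_mul m) hn0 hD₂ hn₂, Int.cast_inj,
    Nat.sum_neg_one_pow_mul_totient_two_mul_div hm hD₁,
    Nat.sum_neg_one_pow_mul_totient_two_mul_div hm hD₂] at hhalf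
  rw [mul_comm] at hD₁ hD₂
  refine Nat.eq_of_divisorSlice_eq hD₁ hD₂ fun f hf => ?_
  rw [Nat.prime_two.divisors, Finset.mem_insert, Finset.mem_singleton] at hf
  rcases hf with rfl | rfl <;>
    refine hinj (Nat.divisorSlice_subset _ _ _) (Nat.divisorSlice_subset _ _ _) ?_ <;>
    dsimp only <;> omega

/-- So's conjecture for even `n = 2 p₁^{J₁} ⋯ p_s^{J_s}` where the partial products satisfy
`∏_{i ≤ r} p_i^{J_i} < p_{r+1}`. -/
theorem so_even_type
    (n s : ℕ) (p J : ℕ → ℕ)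
    (heven : Even n) (hs : 2 ≤ s)
    (hp : ∀ i < s, (p i).Prime ∧ Odd (p i))
    (hJ : ∀ i < s, 1 ≤ J i)
    (hmono : ∀ i j, i < j → j < s → p i < p j)
    (hfact : n = 2 * ∏ i ∈ Finset.range s, p i ^ J i)
    (hsep : ∀ r, 1 ≤ r → r < s → ∏ i ∈ Finset.range r, p i ^ J i < p r)
    (D₁ D₂ : Finset ℕ)
    (hD₁ : D₁ ⊆ n.divisors) (hD₂ : D₂ ⊆ n.divisors)
    (hn₁ : n ∉ D₁) (hn₂ : n ∉ D₂)
    (hspec : spec n (connSet n D₁) = spec n (connSet n D₂)) :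
    D₁ = D₂ :=
  so_even_type_general n s p J hp hfact hsep D₁ D₂ hD₁ hD₂ hn₁ hn₂ hspec
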